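/- Let P_e and P_o be the even and odd parity projectors on L²(ℝ, ℂ), and let g(x) = sin(2πx) − 2πx·cos(2πx). Let k_e, k_o ∈ ℂ and set T = k_e·P_e + k_o·P_o. If for all Schwartz functions ψ, χ ∈ 𝒮(ℝ, ℂ) one has ⟨T(g·ψ), χ⟩ = ⟨Tψ, g·χ⟩, then k_e = k_o, and hence T is a scalar multiple of the identity. -/

import Mathlib

noncomputable section

/-- The even parity projector `(P_e ψ)(x) = (ψ(x) + ψ(−x))/2`. -/
def Pe (ψ : ℝ → ℂ) : ℝ → ℂ := fun x => (ψ x + ψ (-x)) / 2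

/-- The odd parity projector `(P_o ψ)(x) = (ψ(x) − ψ(−x))/2`. -/
def Po (ψ : ℝ → ℂ) : ℝ → ℂ := fun x => (ψ x - ψ (-x)) / 2

/-- The real-valued function `g(x) = sin(2πx) − 2πx·cos(2πx)`, which is
`(A − A*)/(2i)` for `A = 𝒬₁(e^{2πix})`. -/
def gfun : ℝ → ℂ := fun x =>
  ((Real.sin (2 * Real.pi * x) - 2 * Real.pi * x * Real.cos (2 * Real.pi * x) : ℝ) : ℂ)

/-!
Test the relation on an even bump function `ψ` and on `χ = g ψ`, which is odd because `g` is.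
Then `T (g ψ) = k_o g ψ` and `T ψ = k_e ψ`, and since `g` is real both sides become multiples
of `∫ |g ψ|²`: the relation reads `k_o ∫ |g ψ|² = k_e ∫ |g ψ|²`, and `∫ |g ψ|² ≠ 0` because
`g (1/4) = ψ (1/4) = 1`.
-/

open MeasureTheory ComplexConjugate
open scoped ContDiff

section Parity

variable {ψ : ℝ → ℂ}

lemma Pe_of_even (hψ : ψ.Even) : Pe ψ = ψ := by
  funext x
  simp only [Pe, hψ x, add_self_div_two]

lemma Po_of_even (hψ : ψ.Even) : Po ψ = 0 := by
  funext x
  simp [Po, hψ x]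

lemma Pe_of_odd (hψ : ψ.Odd) : Pe ψ = 0 := by
  funext x
  simp [Pe, hψ x]

lemma Po_of_odd (hψ : ψ.Odd) : Po ψ = ψ := by
  funext x
  simp only [Po, hψ x, sub_neg_eq_add, add_self_div_two]

lemma Pe_add_Po (ψ : ℝ → ℂ) : Pe ψ + Po ψ = ψ := by
  funext x
  simp only [Pi.add_apply, Pe, Po]
  ring

end Parity

lemma parity_coeffs_eq_of_weak_comm (ke ko : ℂ) {g ψ : ℝ → ℂ} (hg : g.Odd)
    (hg_real : ∀ x, conj (g x) = g x) (hψ : ψ.Even)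
    (hne : ∫ x, g x * ψ x * conj (g x * ψ x) ≠ 0)
    (hcomm : ∫ x, (ke * Pe (g * ψ) x + ko * Po (g * ψ) x) * conj (g x * ψ x) =
      ∫ x, (ke * Pe ψ x + ko * Po ψ x) * conj (g x * (g x * ψ x))) :
    ke = ko := by
  have hgψ : (g * ψ).Odd := hg.mul_even hψ
  rw [Pe_of_odd hgψ, Po_of_odd hgψ, Pe_of_even hψ, Po_of_even hψ] at hcomm
  have hL : ∫ x, (ke * (0 : ℝ → ℂ) x + ko * (g * ψ) x) * conj (g x * ψ x) =
      ko * ∫ x, g x * ψ x * conj (g x * ψ x) := by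
    rw [← integral_const_mul]
    simp only [Pi.zero_apply, Pi.mul_apply, mul_zero, zero_add, mul_assoc]
  have hR : ∫ x, (ke * ψ x + ko * (0 : ℝ → ℂ) x) * conj (g x * (g x * ψ x)) =
      ke * ∫ x, g x * ψ x * conj (g x * ψ x) := by
    rw [← integral_const_mul]
    congr 1 with x
    simp only [Pi.zero_apply, mul_zero, add_zero, map_mul, hg_real]
    ring
  rw [hL, hR] at hcomm
  exact (mul_right_cancel₀ hne hcomm).symm

lemma integral_mul_conj_ne_zero {X 𝕜 : Type*} [TopologicalSpace X] [MeasurableSpace X]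
    [OpensMeasurableSpace X] {μ : Measure X} [μ.IsOpenPosMeasure] [IsFiniteMeasureOnCompacts μ]
    [RCLike 𝕜] {f : X → 𝕜} (hf : Continuous f) (hf_supp : HasCompactSupport f) {x₀ : X}
    (hx₀ : f x₀ ≠ 0) :
    ∫ x, f x * conj (f x) ∂μ ≠ 0 := by
  have hsupp : HasCompactSupport fun x => ‖f x‖ ^ 2 :=
    hf_supp.comp_left (g := fun z : 𝕜 => ‖z‖ ^ 2) (by simp)
  have hpos : 0 < ∫ x, ‖f x‖ ^ 2 ∂μ :=
    (hf.norm.pow 2).integral_pos_of_hasCompactSupport_nonneg_nonzero hsupp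
      (fun x => by positivity) (x := x₀) (by positivity)
  simp_rw [RCLike.mul_conj, ← RCLike.ofReal_pow, integral_ofReal]
  exact_mod_cast hpos.ne'

lemma gfun_odd : gfun.Odd := by
  intro x
  simp only [gfun, mul_neg, Real.sin_neg, Real.cos_neg, ← Complex.ofReal_neg]
  ring_nf

lemma conj_gfun (x : ℝ) : conj (gfun x) = gfun x :=
  Complex.conj_ofReal _

lemma contDiff_gfun : ContDiff ℝ ∞ gfun := by
  have h : ContDiff ℝ ∞ fun x : ℝ =>
      Real.sin (2 * Real.pi * x) - 2 * Real.pi * x * Real.cos (2 * Real.pi * x) := by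
    fun_prop
  exact Complex.ofRealCLM.contDiff.comp h

lemma gfun_quarter : gfun (1 / 4) = 1 := by
  have h : 2 * Real.pi * (1 / 4 : ℝ) = Real.pi / 2 := by ring
  simp only [gfun, h, Real.sin_pi_div_two, Real.cos_pi_div_two]
  norm_num

def bump : ContDiffBump (0 : ℝ) := ⟨1 / 2, 1, by norm_num, by norm_num⟩

def bumpC : ℝ → ℂ := fun x => (bump x : ℂ)

lemma bumpC_even : bumpC.Even := fun x =>
  congrArg Complex.ofReal (bump.neg x)

lemma contDiff_bumpC : ContDiff ℝ ∞ bumpC :=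
  Complex.ofRealCLM.contDiff.comp bump.contDiff

lemma hasCompactSupport_bumpC : HasCompactSupport bumpC :=
  bump.hasCompactSupport.comp_left Complex.ofReal_zero

lemma bumpC_quarter : bumpC (1 / 4) = 1 := by
  have hmem : (1 / 4 : ℝ) ∈ Metric.closedBall 0 bump.rIn := by
    simp only [Metric.mem_closedBall, dist_zero_right, Real.norm_eq_abs, bump]
    norm_num [abs_of_pos]
  rw [bumpC, bump.one_of_mem_closedBall hmem, Complex.ofReal_one]

/-- If `T = k_e P_e + k_o P_o` weakly commutes with multiplication by
`g(x) = sin(2πx) − 2πx cos(2πx)` on Schwartz functions, then `k_e = k_o`, and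
hence `T` is a scalar multiple of the identity. -/
theorem parity_combination_scalar (ke ko : ℂ)
    (T : (ℝ → ℂ) → (ℝ → ℂ))
    (hT : T = fun ψ x => ke * Pe ψ x + ko * Po ψ x)
    (hcomm : ∀ ψ χ : SchwartzMap ℝ ℂ,
      (∫ x : ℝ, T (fun t => gfun t * ψ t) x * (starRingEnd ℂ) (χ x)) =
        ∫ x : ℝ, T ⇑ψ x * (starRingEnd ℂ) (gfun x * χ x)) :
    ke = ko ∧ ∀ ψ : ℝ → ℂ, T ψ = fun x => ke * ψ x := by
  subst hT
  have hχ_supp : HasCompactSupport (gfun * bumpC) := hasCompactSupport_bumpC.mul_left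
  have hχ_smooth : ContDiff ℝ ∞ (gfun * bumpC) := contDiff_gfun.mul contDiff_bumpC
  have hke : ke = ko := by
    have key := hcomm (hasCompactSupport_bumpC.toSchwartzMap contDiff_bumpC)
      (hχ_supp.toSchwartzMap hχ_smooth)
    refine parity_coeffs_eq_of_weak_comm ke ko gfun_odd conj_gfun bumpC_even ?_ key
    refine integral_mul_conj_ne_zero (x₀ := 1 / 4) hχ_smooth.continuous hχ_supp ?_
    rw [gfun_quarter, bumpC_quarter]
    norm_num
  subst hke
  refine ⟨rfl, fun φ => funext fun x => ?_⟩
  change ke * Pe φ x + ke * Po φ x = ke * φ x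
  rw [← mul_add]
  exact congrArg _ (congrFun (Pe_add_Po φ) x)

end
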